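/- For every integer n ≥ 3, C_4(n) := Σ_{k=1}^{n} (−1)^(k−1) · [2n, n−k] · k^4 equals (−1)^n · n(n+1) · (2n^3 − n^2 − 5n + 1) / (2(2n−3)(2n−5)). -/

import Mathlib

open Finset

/-- Rising factorial `(x)_n = x(x+1)⋯(x+n-1)`. -/
noncomputable def rfact (x : ℝ) : ℕ → ℝ
  | 0 => 1
  | n + 1 => rfact x n * (x + n)

/-- The bracket coefficient `[n, k] = (1/2)_n / ((1/2)_k (1/2)_{n-k})`. -/
noncomputable def brkt (n k : ℕ) : ℝ :=
  rfact (1 / 2) n / (rfact (1 / 2) k * rfact (1 / 2) (n - k))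

/-!
The ratio `[2n, n-k-1] / [2n, n-k] = (2n-2k-1)/(2n+2k+1)` makes the summand hypergeometric in `k`,
and Gosper's algorithm produces the rational certificate `c4Cert n k` for which
`A k = (-1)^k [2n, n-k] · c4Cert n k` satisfies `A (k+1) - A k = (-1)^(k-1) [2n, n-k] k^4`
for `1 ≤ k < n`. Since `c4Cert n 1 = 0`, the sum is `A n` plus its last term `(-1)^(n-1) n^4`.
-/

lemma rfact_pos {x : ℝ} (hx : 0 < x) (n : ℕ) : 0 < rfact x n := by
  induction n with
  | zero => exact one_pos
  | succ m ih => exact mul_pos ih (by positivity)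

lemma brkt_zero_right (N : ℕ) : brkt N 0 = 1 := by
  rw [brkt, Nat.sub_zero, rfact, one_mul, div_self (rfact_pos one_half_pos N).ne']

lemma brkt_succ_mul {N j : ℕ} (h : j < N) :
    brkt N (j + 1) * (j + 1 / 2) = brkt N j * (N - j - 1 / 2) := by
  obtain ⟨m, rfl⟩ : ∃ m, N = j + 1 + m := ⟨N - (j + 1), by omega⟩
  have hsub : j + 1 + m - j = m + 1 := by omega
  simp only [brkt, rfact, add_tsub_cancel_left, hsub]
  have hpos := rfact_pos one_half_pos
  field_simp [(hpos j).ne', (hpos m).ne', (hpos (j + 1 + m)).ne']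
  push_cast
  ring

lemma brkt_two_mul_sub_succ {n k : ℕ} (h : k < n) :
    brkt (2 * n) (n - (k + 1)) * (2 * n + 2 * k + 1) =
      brkt (2 * n) (n - k) * (2 * n - 2 * k - 1) := by
  have hrec := brkt_succ_mul (N := 2 * n) (j := n - (k + 1)) (by omega)
  rw [show n - (k + 1) + 1 = n - k by omega] at hrec
  have hcast : ((n - (k + 1) : ℕ) : ℝ) = n - k - 1 := by
    rw [Nat.cast_sub (by omega)]; push_cast; ring
  rw [hcast] at hrec
  push_cast at hrec
  linear_combination (-2) * hrec

noncomputable def c4Cert (n k : ℝ) : ℝ :=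
  ((2 * n - 1) ^ 2 * k - 2 * (4 * n ^ 2 - 8 * n + 5) * k ^ 3 +
      (2 * n - 3) * (2 * n - 5) * k ^ 4 + 2 * (2 * n - 3) * k ^ 5) /
    (2 * (2 * n - 3) * (2 * n - 5))

section Certificate

variable {n : ℝ} (h3 : 2 * n - 3 ≠ 0) (h5 : 2 * n - 5 ≠ 0)
include h3 h5

lemma c4Cert_gosper (k : ℝ) :
    (2 * n + 2 * k + 1) * k ^ 4 =
      (2 * n + 2 * k + 1) * c4Cert n k + (2 * n - 2 * k - 1) * c4Cert n (k + 1) := by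
  unfold c4Cert
  field_simp
  ring

lemma c4Cert_self_sub_pow_four :
    c4Cert n n - n ^ 4 =
      n * (n + 1) * (2 * n ^ 3 - n ^ 2 - 5 * n + 1) / (2 * (2 * n - 3) * (2 * n - 5)) := by
  unfold c4Cert
  field_simp
  ring

end Certificate

lemma c4Cert_one (n : ℝ) : c4Cert n 1 = 0 := by
  rw [c4Cert, div_eq_zero_iff]
  left; ring

lemma two_mul_natCast_sub_odd_ne_zero (n j : ℕ) : 2 * (n : ℝ) - (2 * j + 1) ≠ 0 := by
  rw [sub_ne_zero]
  exact_mod_cast (by omega : 2 * n ≠ 2 * j + 1)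

noncomputable def c4Antidiff (n k : ℕ) : ℝ :=
  (-1) ^ k * brkt (2 * n) (n - k) * c4Cert n k

lemma c4Antidiff_succ_sub {n k : ℕ} (hk : 1 ≤ k) (hkn : k < n) :
    (-1 : ℝ) ^ (k - 1) * brkt (2 * n) (n - k) * (k : ℝ) ^ 4 =
      c4Antidiff n (k + 1) - c4Antidiff n k := by
  have h3 := two_mul_natCast_sub_odd_ne_zero n 1
  have h5 := two_mul_natCast_sub_odd_ne_zero n 2
  norm_num at h3 h5
  have hpos : (0 : ℝ) < 2 * n + 2 * k + 1 := by positivity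
  have hratio := brkt_two_mul_sub_succ hkn
  have hgosper := c4Cert_gosper h3 h5 k
  obtain ⟨j, rfl⟩ : ∃ j, k = j + 1 := ⟨k - 1, by omega⟩
  simp only [c4Antidiff, add_tsub_cancel_right, pow_succ (-1 : ℝ)]
  refine mul_left_cancel₀ hpos.ne' ?_
  push_cast at hratio hgosper ⊢
  linear_combination (-1) ^ j * (brkt (2 * n) (n - (j + 1)) * hgosper -
    c4Cert n (j + 1 + 1) * hratio)

theorem C_four_eval_general (n : ℕ) :
    ∑ k ∈ Finset.Icc 1 n, (-1 : ℝ) ^ (k - 1) * brkt (2 * n) (n - k) * (k : ℝ) ^ 4 =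
      (-1 : ℝ) ^ n * ((n : ℝ) * ((n : ℝ) + 1)) *
          (2 * (n : ℝ) ^ 3 - (n : ℝ) ^ 2 - 5 * (n : ℝ) + 1) /
        (2 * (2 * (n : ℝ) - 3) * (2 * (n : ℝ) - 5)) := by
  rcases Nat.eq_zero_or_pos n with rfl | hn
  · simp
  have htelescope : ∑ k ∈ Ico 1 n, (-1 : ℝ) ^ (k - 1) * brkt (2 * n) (n - k) * (k : ℝ) ^ 4 =
      c4Antidiff n n - c4Antidiff n 1 := by
    rw [sum_congr rfl fun k hk => c4Antidiff_succ_sub (mem_Ico.1 hk).1 (mem_Ico.1 hk).2,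
      sum_Ico_sub _ hn]
  have h3 := two_mul_natCast_sub_odd_ne_zero n 1
  have h5 := two_mul_natCast_sub_odd_ne_zero n 2
  norm_num at h3 h5
  rw [← Ico_add_one_right_eq_Icc, sum_Ico_succ_top hn, htelescope, c4Antidiff, c4Antidiff,
    Nat.cast_one, c4Cert_one, Nat.sub_self, brkt_zero_right]
  obtain ⟨m, rfl⟩ : ∃ m, n = m + 1 := ⟨n - 1, by omega⟩
  rw [add_tsub_cancel_right, pow_succ]
  linear_combination (-1) ^ m * (-1) * c4Cert_self_sub_pow_four h3 h5

theorem C_four_eval (n : ℕ) (hn : 3 ≤ n) :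
    ∑ k ∈ Finset.Icc 1 n, (-1 : ℝ) ^ (k - 1) * brkt (2 * n) (n - k) * (k : ℝ) ^ 4 =
      (-1 : ℝ) ^ n * ((n : ℝ) * ((n : ℝ) + 1)) *
          (2 * (n : ℝ) ^ 3 - (n : ℝ) ^ 2 - 5 * (n : ℝ) + 1) /
        (2 * (2 * (n : ℝ) - 3) * (2 * (n : ℝ) - 5)) :=
  C_four_eval_general n
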